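/- arXiv:1509.00921 — 2 statements merged into one kernel-verified Lean document; each statement's English description precedes it below -/
import Mathlib

section
/- Let Λ be a ring and C_* a chain complex of finitely generated free Λ-modules (bounded below at degree 0). If H_i(C_*) = 0 for all i ≤ k, then ker ∂_i is a finitely generated stably free Λ-module for all i ≤ k+1. -/
/-!
By exactness, `∂_{i+1}` corestricts to a surjection `C_{i+1} → ker ∂_i` with kernel
`ker ∂_{i+1}`. If `ker ∂_i` is stably free it is projective, so this surjection splits and
`C_{i+1} ≃ ker ∂_{i+1} × ker ∂_i`; adding to both sides the free module that makes `ker ∂_i` free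
shows that `ker ∂_{i+1}` is stably free, and it is finitely generated as a summand of `C_{i+1}`.
Induct on `i`, starting from the free module `C_0`.
-/

/-- A module is stably free if adding a finitely generated free module makes it free. -/
def StablyFree (Λ : Type*) [Ring Λ] (P : Type*) [AddCommGroup P] [Module Λ P] : Prop :=
  ∃ n m : ℕ, Nonempty ((P × (Fin n → Λ)) ≃ₗ[Λ] (Fin m → Λ))

namespace StablyFree

variable {Λ : Type*} [Ring Λ] {P : Type*} [AddCommGroup P] [Module Λ P]

theorem of_prod_fin_equiv {F : Type*} [AddCommGroup F] [Module Λ F] [Module.Finite Λ F]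
    [Module.Free Λ F] {n : ℕ} (e : (P × (Fin n → Λ)) ≃ₗ[Λ] F) : StablyFree Λ P :=
  ⟨n, _, ⟨e.trans ((Module.Free.chooseBasis Λ F).reindex (Fintype.equivFin _)).equivFun⟩⟩

theorem of_free [Module.Finite Λ P] [Module.Free Λ P] : StablyFree Λ P :=
  of_prod_fin_equiv (n := 0) (LinearEquiv.refl Λ _)

theorem projective (h : StablyFree Λ P) : Module.Projective Λ P := by
  obtain ⟨n, m, ⟨e⟩⟩ := h
  have : Module.Projective Λ (P × (Fin n → Λ)) := .of_equiv' e.symm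
  exact .of_split (LinearMap.inl Λ P (Fin n → Λ)) (LinearMap.fst Λ P (Fin n → Λ))
    (LinearMap.fst_comp_inl ..)

theorem of_prod_equiv {K F : Type*} [AddCommGroup K] [Module Λ K] [AddCommGroup F] [Module Λ F]
    [Module.Finite Λ F] [Module.Free Λ F] (e : (K × P) ≃ₗ[Λ] F) (hP : StablyFree Λ P) :
    StablyFree Λ K := by
  obtain ⟨n, m, ⟨eP⟩⟩ := hP
  exact of_prod_fin_equiv (n := m) <|
    ((LinearEquiv.refl Λ K).prodCongr eP.symm).trans <|
      (LinearEquiv.prodAssoc Λ K P _).symm.trans (e.prodCongr (LinearEquiv.refl Λ _))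

theorem ker_of_surjective {F : Type*} [AddCommGroup F] [Module Λ F] [Module.Finite Λ F]
    [Module.Free Λ F] (f : F →ₗ[Λ] P) (hf : Function.Surjective f) (hP : StablyFree Λ P) :
    Module.Finite Λ (LinearMap.ker f) ∧ StablyFree Λ (LinearMap.ker f) := by
  have := hP.projective
  obtain ⟨s, hs⟩ := f.exists_rightInverse_of_surjective (LinearMap.range_eq_top.2 hf)
  let e : F ≃ₗ[Λ] LinearMap.ker f × P :=
    ((LinearMap.exact_subtype_ker_map f).splitSurjectiveEquiv
      (LinearMap.ker f).injective_subtype ⟨s, hs⟩).1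
  exact ⟨.of_surjective (LinearMap.fst Λ _ P ∘ₗ e.toLinearMap)
      (Prod.fst_surjective.comp e.surjective), of_prod_equiv e.symm hP⟩

theorem ker_of_exact {F M N : Type*} [AddCommGroup F] [Module Λ F] [Module.Finite Λ F]
    [Module.Free Λ F] [AddCommGroup M] [Module Λ M] [AddCommGroup N] [Module Λ N]
    {f : F →ₗ[Λ] M} {g : M →ₗ[Λ] N} (h : Function.Exact f g)
    (hg : StablyFree Λ (LinearMap.ker g)) :
    Module.Finite Λ (LinearMap.ker f) ∧ StablyFree Λ (LinearMap.ker f) := by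
  have hmem : ∀ x, f x ∈ LinearMap.ker g := fun x => (h (f x)).2 ⟨x, rfl⟩
  have hsurj : Function.Surjective (f.codRestrict _ hmem) := fun ⟨y, hy⟩ =>
    let ⟨x, hx⟩ := (h y).1 hy
    ⟨x, Subtype.ext hx⟩
  rw [← LinearMap.ker_codRestrict _ _ hmem]
  exact ker_of_surjective _ hsurj hg

end StablyFree

/-- If `C_*` is a chain complex of finitely generated free `Λ`-modules (bounded below at
degree `0`, with `d i : C (i+1) → C i` representing `∂_{i+1}`) and `H_i(C_*) = 0` for all
`i ≤ k`, then `ker ∂_i` is finitely generated and stably free for all `i ≤ k + 1`.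
(Here `ker ∂_0 = C 0`, and `ker ∂_{i+1} = ker (d i)` for `i ≤ k`.) -/
theorem kernels_stablyFree_of_acyclic (Λ : Type*) [Ring Λ] (k : ℕ)
    (C : ℕ → Type*) [∀ i, AddCommGroup (C i)] [∀ i, Module Λ (C i)]
    [∀ i, Module.Finite Λ (C i)] [∀ i, Module.Free Λ (C i)]
    (d : ∀ i, C (i + 1) →ₗ[Λ] C i)
    (hdd : ∀ i, (d i).comp (d (i + 1)) = 0)
    (h0 : Function.Surjective (d 0))
    (hex : ∀ i < k, LinearMap.ker (d i) ≤ LinearMap.range (d (i + 1))) :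
    (Module.Finite Λ (C 0) ∧ StablyFree Λ (C 0)) ∧
      ∀ i ≤ k, Module.Finite Λ (LinearMap.ker (d i)) ∧
        StablyFree Λ (LinearMap.ker (d i)) := by
  refine ⟨⟨inferInstance, .of_free⟩, fun i hi => ?_⟩
  induction i with
  | zero => exact StablyFree.ker_of_surjective (d 0) h0 .of_free
  | succ i ih =>
    have hexact : Function.Exact (d (i + 1)) (d i) := LinearMap.exact_iff.2 <|
      le_antisymm (hex i hi) (LinearMap.range_le_ker_iff.2 (hdd i))
    exact StablyFree.ker_of_exact hexact (ih (by omega)).2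
end

section
/- Let Λ be a ring and C_* a chain complex of finitely generated free Λ-modules (bounded below at degree 0). If H_i(C_*) = 0 for all i ≤ k, then H_{k+1}(C_*) is a finitely generated Λ-module. -/
/-!
The cycles `ker ∂ᵢ` are finitely generated projective for `i ≤ k`, by induction on `i`:
`∂₀ : C₁ → C₀` is onto a projective module, and exactness at `Cᵢ` makes `∂ᵢ₊₁` a surjection
from `Cᵢ₊₁` onto `ker ∂ᵢ`, projective by induction. A surjection onto a projective module
splits, so its kernel is a direct summand of the (finite free) source. Then
`H_{k+1} = ker ∂_{k+1} / im ∂_{k+2}` is a quotient of a finitely generated module.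
-/

namespace LinearMap

variable {R M N P : Type*} [Ring R] [AddCommGroup M] [Module R M] [AddCommGroup N] [Module R N]
  [AddCommGroup P] [Module R P]

theorem exists_leftInverse_ker_subtype_of_surjective [Module.Projective R N] (f : M →ₗ[R] N)
    (hf : Function.Surjective f) : ∃ r : M →ₗ[R] ker f, r ∘ₗ (ker f).subtype = id := by
  obtain ⟨s, hs⟩ := f.exists_rightInverse_of_surjective (range_eq_top.2 hf)
  refine ⟨codRestrict (ker f) (id - s ∘ₗ f) fun x => ?_, ?_⟩
  · simp [mem_ker, ← comp_apply f s, hs]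
  · ext ⟨x, hx⟩
    simp [mem_ker.mp hx]

theorem surjective_codRestrict_ker_of_exact {f : M →ₗ[R] N} {g : N →ₗ[R] P} (hgf : g ∘ₗ f = 0)
    (hexact : ker g ≤ range f) :
    Function.Surjective (codRestrict (ker g) f fun x => by simp [← comp_apply, hgf]) := by
  rintro ⟨y, hy⟩
  obtain ⟨x, rfl⟩ := hexact hy
  exact ⟨x, rfl⟩

end LinearMap

section

open LinearMap

variable {R M N P : Type*} [Ring R] [AddCommGroup M] [Module R M] [AddCommGroup N] [Module R N]
  [AddCommGroup P] [Module R P]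

theorem Module.Finite.ker_of_surjective [Module.Finite R M] [Module.Projective R N]
    (f : M →ₗ[R] N) (hf : Function.Surjective f) : Module.Finite R (ker f) := by
  obtain ⟨r, hr⟩ := f.exists_leftInverse_ker_subtype_of_surjective hf
  exact .of_surjective r fun y => ⟨y, congr($hr y)⟩

theorem Module.Projective.ker_of_surjective [Module.Projective R M] [Module.Projective R N]
    (f : M →ₗ[R] N) (hf : Function.Surjective f) : Module.Projective R (ker f) := by
  obtain ⟨r, hr⟩ := f.exists_leftInverse_ker_subtype_of_surjective hf
  exact .of_split _ r hr

theorem Module.Finite.ker_of_exact [Module.Finite R M] {f : M →ₗ[R] N} {g : N →ₗ[R] P}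
    [Module.Projective R (ker g)] (hgf : g ∘ₗ f = 0) (hexact : ker g ≤ LinearMap.range f) :
    Module.Finite R (ker f) := by
  have := Module.Finite.ker_of_surjective _ (surjective_codRestrict_ker_of_exact hgf hexact)
  rwa [ker_codRestrict] at this

theorem Module.Projective.ker_of_exact [Module.Projective R M] {f : M →ₗ[R] N} {g : N →ₗ[R] P}
    [Module.Projective R (ker g)] (hgf : g ∘ₗ f = 0) (hexact : ker g ≤ LinearMap.range f) :
    Module.Projective R (ker f) := by
  have := Module.Projective.ker_of_surjective _ (surjective_codRestrict_ker_of_exact hgf hexact)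
  rwa [ker_codRestrict] at this

end

/-- If `C_*` is a chain complex of finitely generated free `Λ`-modules (bounded below at
degree `0`, with `d i : C (i+1) → C i` representing `∂_{i+1}`) and `H_i(C_*) = 0` for all
`i ≤ k`, then `H_{k+1}(C_*) = ker ∂_{k+1} / im ∂_{k+2}` is a finitely generated `Λ`-module. -/
theorem homology_fg_of_acyclic_below (Λ : Type*) [Ring Λ] (k : ℕ)
    (C : ℕ → Type*) [∀ i, AddCommGroup (C i)] [∀ i, Module Λ (C i)]
    [∀ i, Module.Finite Λ (C i)] [∀ i, Module.Free Λ (C i)]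
    (d : ∀ i, C (i + 1) →ₗ[Λ] C i)
    (hdd : ∀ i, (d i).comp (d (i + 1)) = 0)
    (h0 : Function.Surjective (d 0))
    (hex : ∀ i < k, LinearMap.ker (d i) ≤ LinearMap.range (d (i + 1))) :
    Module.Finite Λ
      (↥(LinearMap.ker (d k)) ⧸
        (Submodule.comap (LinearMap.ker (d k)).subtype (LinearMap.range (d (k + 1))))) := by
  have cycles : ∀ i ≤ k, Module.Finite Λ (LinearMap.ker (d i)) ∧
      Module.Projective Λ (LinearMap.ker (d i)) := by
    intro i hi
    induction i with
    | zero => exact ⟨.ker_of_surjective _ h0, .ker_of_surjective _ h0⟩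
    | succ n ih =>
      have : Module.Projective Λ (LinearMap.ker (d n)) := (ih (by omega)).2
      exact ⟨.ker_of_exact (hdd n) (hex n (by omega)), .ker_of_exact (hdd n) (hex n (by omega))⟩
  have : Module.Finite Λ (LinearMap.ker (d k)) := (cycles k le_rfl).1
  exact Module.Finite.quotient Λ _
end
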